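/- arXiv:0710.2347 — 2 statements merged into one kernel-verified Lean document; each statement's English description precedes it below -/
import Mathlib

section
/- Let S be a countable set of positive reals having 0 as an accumulation point. The restriction map ψ : cLO(U_S) → cLO(Q_S), sending a convex linear ordering of U_S to its restriction to Q_S, is a homeomorphism between the spaces of convex linear orderings (each with the topology inherited from the product topology on 2^{X×X}). In particular cLO(U_S) is a compact metrizable space. -/
/-! In the metric `dU`, truncating `x ∈ U_S` below a level `t > 0` gives a finitely supported
function within distance `t` of `x`, so `Q_S` is dense in `U_S`. In an ultrametric space a convex
ordering is locally constant: if `x'` and `y'` are closer to `x` and `y` than `x` and `y` are to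
each other, then `x < y ↔ x' < y'`. Hence a convex ordering of `U_S` is determined by its
restriction to `Q_S`, and a convex ordering of `Q_S` extends to `U_S` by comparing nearby points
of `Q_S`. So `ψ` is a continuous bijection from `cLO(U_S)`, a closed subspace of the compact space
`2^{U_S × U_S}`, onto `cLO(Q_S)`, which is metrizable because `Q_S` is countable. -/

open Classical

/-- Membership in `U_S` : the support of `x : S → ℚ` is contained in the range of some
strictly decreasing sequence of elements of `S` converging to `0`. -/
def USsupp (S : Set ℝ) (x : S → ℚ) : Prop :=
  ∃ f : ℕ → ℝ, StrictAnti f ∧ (∀ i, f i ∈ S) ∧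
    Filter.Tendsto f Filter.atTop (nhds 0) ∧
    ∀ s : S, x s ≠ 0 → ∃ i, (s : ℝ) = f i

/-- The space `U_S`, completion of `Q_S`. -/
def US (S : Set ℝ) := {x : S → ℚ // USsupp S x}

/-- The distance on `U_S` : `d x y = min {s ∈ S | x and y agree above s}` for `x ≠ y`,
and `d x x = 0`. -/
noncomputable def dU (S : Set ℝ) (x y : US S) : ℝ :=
  if x = y then 0
  else sInf {r : ℝ | r ∈ S ∧ ∀ t : S, r < (t : ℝ) → x.1 t = y.1 t}

/-- `r` is a strict total order (irreflexive, transitive, trichotomous). -/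
def IsSTO {X : Type*} (r : X → X → Prop) : Prop :=
  (∀ x, ¬ r x x) ∧ (∀ x y z, r x y → r y z → r x z) ∧ (∀ x y, r x y ∨ x = y ∨ r y x)

/-- `r` is a convex linear ordering with respect to the distance `d` : a strict total
order for which every closed metric ball is an interval (equivalently,
`r x y → r y z → d x y ≤ d x z ∧ d y z ≤ d x z`). -/
def IsConvexSTO {X : Type*} (d : X → X → ℝ) (r : X → X → Prop) : Prop :=
  IsSTO r ∧ ∀ x y z, r x y → r y z → d x y ≤ d x z ∧ d y z ≤ d x z

/-- `Q_S`, viewed as the subspace of `U_S` of finitely supported elements. -/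
def Qsub (S : Set ℝ) := {x : US S // {s : S | x.1 s ≠ 0}.Finite}

/-- The space of convex linear orderings of `U_S` (as Boolean relations), a subspace
of `2^{U_S × U_S}` with the product topology. -/
def cLOU (S : Set ℝ) :=
  {r : US S → US S → Bool // IsConvexSTO (dU S) (fun x y => r x y = true)}

instance (S : Set ℝ) : TopologicalSpace (cLOU S) :=
  inferInstanceAs (TopologicalSpace
    {r : US S → US S → Bool // IsConvexSTO (dU S) (fun x y => r x y = true)})

/-- The space of convex linear orderings of `Q_S` (as Boolean relations), a subspace
of `2^{Q_S × Q_S}` with the product topology. -/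
def cLOQ (S : Set ℝ) :=
  {r : Qsub S → Qsub S → Bool //
    IsConvexSTO (fun x y : Qsub S => dU S x.1 y.1) (fun x y => r x y = true)}

instance (S : Set ℝ) : TopologicalSpace (cLOQ S) :=
  inferInstanceAs (TopologicalSpace
    {r : Qsub S → Qsub S → Bool //
      IsConvexSTO (fun x y : Qsub S => dU S x.1 y.1) (fun x y => r x y = true)})

/-- The restriction map `ψ : cLO(U_S) → cLO(Q_S)`. -/
def ψ (S : Set ℝ) (r : cLOU S) : cLOQ S :=
  ⟨fun x y => r.1 x.1 y.1, by
    obtain ⟨⟨hirr, htr, htri⟩, hconv⟩ := r.2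
    refine ⟨⟨fun x => hirr x.1, fun x y z => htr x.1 y.1 z.1, fun x y => ?_⟩,
      fun x y z hxy hyz => hconv x.1 y.1 z.1 hxy hyz⟩
    rcases htri x.1 y.1 with h | h | h
    · exact Or.inl h
    · exact Or.inr (Or.inl (Subtype.ext h))
    · exact Or.inr (Or.inr h)⟩

open Filter

namespace USsupp

variable {S : Set ℝ} {x : S → ℚ}

lemma pos (hx : USsupp S x) {s : S} (hs : x s ≠ 0) : 0 < (s : ℝ) := by
  obtain ⟨f, hf, -, hlim, hsupp⟩ := hx
  obtain ⟨i, hi⟩ := hsupp s hs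
  rw [hi]
  exact (hf.antitone.le_of_tendsto hlim (i + 1)).trans_lt (hf i.lt_succ_self)

lemma finite_ge (hx : USsupp S x) {t : ℝ} (ht : 0 < t) : {s : S | t ≤ s ∧ x s ≠ 0}.Finite := by
  obtain ⟨f, -, -, hlim, hsupp⟩ := hx
  have hfin : {i | t ≤ f i}.Finite := by
    have := hlim.eventually (gt_mem_nhds ht)
    rw [← Nat.cofinite_eq_atTop, eventually_cofinite] at this
    simpa using this
  refine ((hfin.image f).preimage Subtype.val_injective.injOn).subset ?_
  rintro s ⟨hts, hs⟩
  obtain ⟨i, hi⟩ := hsupp s hs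
  exact ⟨i, show t ≤ f i from hi ▸ hts, hi.symm⟩

end USsupp

section UltrametricUS

variable {S : Set ℝ}

lemma US.exists_max_ne {x y : US S} (hxy : x ≠ y) :
    ∃ m : S, x.1 m ≠ y.1 m ∧ ∀ t : S, (m : ℝ) < t → x.1 t = y.1 t := by
  have hsupp : ∀ s : S, x.1 s ≠ y.1 s → x.1 s ≠ 0 ∨ y.1 s ≠ 0 := fun s hs => by
    by_contra! h
    exact hs (h.1.trans h.2.symm)
  obtain ⟨s₀, hs₀⟩ : ∃ s, x.1 s ≠ y.1 s := by
    by_contra! h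
    exact hxy (Subtype.ext (funext h))
  have hs₀pos : 0 < (s₀ : ℝ) := (hsupp s₀ hs₀).elim x.2.pos y.2.pos
  have hfin : {s : S | (s₀ : ℝ) ≤ s ∧ x.1 s ≠ y.1 s}.Finite :=
    ((x.2.finite_ge hs₀pos).union (y.2.finite_ge hs₀pos)).subset fun s ⟨h₀, hs⟩ =>
      (hsupp s hs).imp (⟨h₀, ·⟩) (⟨h₀, ·⟩)
  obtain ⟨m, ⟨hm₀, hm⟩, hmax⟩ :=
    Set.exists_max_image _ (fun s : S => (s : ℝ)) hfin ⟨s₀, le_rfl, hs₀⟩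
  refine ⟨m, hm, fun t hmt => ?_⟩
  by_contra ht
  exact (hmax t ⟨hm₀.trans hmt.le, ht⟩).not_gt hmt

lemma dU_eq_of_max_ne {x y : US S} {m : S} (hm : x.1 m ≠ y.1 m)
    (habove : ∀ t : S, (m : ℝ) < t → x.1 t = y.1 t) : dU S x y = m := by
  have hxy : x ≠ y := fun h => hm (by rw [h])
  rw [dU, if_neg hxy]
  refine IsLeast.csInf_eq ⟨⟨m.2, habove⟩, fun r hr => ?_⟩
  by_contra! hrm
  exact hm (hr.2 m hrm)

lemma dU_self (x : US S) : dU S x x = 0 := if_pos rfl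

lemma dU_comm (x y : US S) : dU S x y = dU S y x := by
  by_cases hxy : x = y
  · rw [hxy]
  obtain ⟨m, hm, habove⟩ := US.exists_max_ne hxy
  rw [dU_eq_of_max_ne hm habove, dU_eq_of_max_ne hm.symm fun t ht => (habove t ht).symm]

lemma le_dU {x y : US S} {s : S} (hs : x.1 s ≠ y.1 s) : (s : ℝ) ≤ dU S x y := by
  obtain ⟨m, hm, habove⟩ := US.exists_max_ne fun h : x = y => hs (by rw [h])
  rw [dU_eq_of_max_ne hm habove]
  by_contra! hms
  exact hs (habove s hms)

lemma dU_le_of_agree {x y : US S} {t : ℝ} (ht : 0 ≤ t)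
    (hagree : ∀ s : S, t < s → x.1 s = y.1 s) : dU S x y ≤ t := by
  by_cases hxy : x = y
  · rw [hxy, dU_self]
    exact ht
  obtain ⟨m, hm, habove⟩ := US.exists_max_ne hxy
  rw [dU_eq_of_max_ne hm habove]
  by_contra! htm
  exact hm (hagree m htm)

lemma dU_pos {x y : US S} (hxy : x ≠ y) : 0 < dU S x y := by
  obtain ⟨m, hm, habove⟩ := US.exists_max_ne hxy
  rw [dU_eq_of_max_ne hm habove]
  by_cases hx : x.1 m = 0
  · exact y.2.pos (hx ▸ hm.symm)
  · exact x.2.pos hx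

lemma dU_nonneg (x y : US S) : 0 ≤ dU S x y := by
  by_cases hxy : x = y
  · rw [hxy, dU_self]
  · exact (dU_pos hxy).le

lemma dU_triangle_max (x y z : US S) : dU S x z ≤ max (dU S x y) (dU S y z) := by
  by_cases hxz : x = z
  · rw [hxz, dU_self]
    exact le_max_of_le_left (dU_nonneg z y)
  obtain ⟨m, hm, habove⟩ := US.exists_max_ne hxz
  rw [dU_eq_of_max_ne hm habove]
  by_cases hxy : x.1 m = y.1 m
  · exact le_max_of_le_right (le_dU fun hyz => hm (hxy.trans hyz))
  · exact le_max_of_le_left (le_dU hxy)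

noncomputable instance : MetricSpace (US S) where
  dist := dU S
  dist_self := dU_self
  dist_comm := dU_comm
  dist_triangle x y z :=
    (dU_triangle_max x y z).trans (max_le_add_of_nonneg (dU_nonneg x y) (dU_nonneg y z))
  eq_of_dist_eq_zero {x y} h := by_contra fun hxy => (dU_pos hxy).ne' h

instance : IsUltrametricDist (US S) := ⟨dU_triangle_max⟩

noncomputable def US.trunc (t : ℝ) (x : US S) : US S :=
  ⟨fun s => if t < (s : ℝ) then x.1 s else 0, by
    obtain ⟨f, hf, hfS, hlim, hsupp⟩ := x.2
    refine ⟨f, hf, hfS, hlim, fun s hs => hsupp s fun h => hs ?_⟩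
    simp [h]⟩

lemma US.trunc_finite_support {t : ℝ} (ht : 0 < t) (x : US S) :
    {s : S | (x.trunc t).1 s ≠ 0}.Finite :=
  (x.2.finite_ge ht).subset fun s hs => by
    by_cases hts : t < (s : ℝ)
    · exact ⟨hts.le, by simpa [US.trunc, hts] using hs⟩
    · simp [US.trunc, hts] at hs

lemma US.dist_trunc_le {t : ℝ} (ht : 0 ≤ t) (x : US S) : dist x (x.trunc t) ≤ t :=
  dU_le_of_agree ht fun _ hs => (if_pos hs).symm

lemma US.dense_finite_support : Dense {x : US S | {s | x.1 s ≠ 0}.Finite} :=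
  Metric.dense_iff.2 fun x ε hε =>
    ⟨x.trunc (ε / 2), Metric.mem_ball'.2 ((x.dist_trunc_le (half_pos hε).le).trans_lt
      (half_lt_self hε)), x.trunc_finite_support (half_pos hε)⟩

end UltrametricUS

lemma IsUltrametricDist.dist_eq_of_dist_lt {X : Type*} [PseudoMetricSpace X]
    [IsUltrametricDist X] {x y x' y' : X} (hx : dist x x' < dist x y) (hy : dist y y' < dist x y) :
    dist x' y' = dist x y := by
  have hx'y : dist x' y = dist x y := by
    rw [dist_eq_max_of_dist_ne_dist x' x y (by rw [dist_comm]; exact hx.ne),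
      max_eq_right (by rw [dist_comm]; exact hx.le)]
  rw [dist_eq_max_of_dist_ne_dist x' y y' (by rw [hx'y]; exact hy.ne'), hx'y,
    max_eq_left hy.le]

namespace IsConvexSTO

variable {X : Type*} [PseudoMetricSpace X] [IsUltrametricDist X] {r : X → X → Prop}

lemma rel_of_dist_lt (hr : IsConvexSTO dist r) {x y x' y' : X} (hxy : r x y)
    (hx : dist x x' < dist x y) (hy : dist y y' < dist x y) : r x' y' := by
  obtain ⟨⟨-, -, htri⟩, hconv⟩ := hr
  have hx'y : r x' y := by
    rcases htri x' y with h | rfl | h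
    · exact h
    · exact absurd hx (lt_irrefl _)
    · exact absurd (hconv x y x' hxy h).1 hx.not_ge
  have hd : dist x' y = dist x y :=
    IsUltrametricDist.dist_eq_of_dist_lt hx (by rw [dist_self]; exact dist_nonneg.trans_lt hx)
  rcases htri x' y' with h | rfl | h
  · exact h
  · rw [dist_comm, ← hd] at hy
    exact absurd hy (lt_irrefl _)
  · have := (hconv y' x' y h hx'y).2
    rw [hd, dist_comm y'] at this
    exact absurd this hy.not_ge

lemma rel_iff_of_dist_lt (hr : IsConvexSTO dist r) {x y x' y' : X}
    (hx : dist x x' < dist x y) (hy : dist y y' < dist x y) : r x y ↔ r x' y' := by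
  have hd := IsUltrametricDist.dist_eq_of_dist_lt hx hy
  refine ⟨fun h => hr.rel_of_dist_lt h hx hy, fun h => hr.rel_of_dist_lt h ?_ ?_⟩
  · rwa [hd, dist_comm]
  · rwa [hd, dist_comm]

end IsConvexSTO

lemma Dense.exists_subtype_dist_lt {X : Type*} [PseudoMetricSpace X] {p : X → Prop}
    (hD : Dense {x | p x}) (x : X) {ε : ℝ} (hε : 0 < ε) :
    ∃ a : {x // p x}, dist x a.1 < ε :=
  let ⟨a, ha, hxa⟩ := hD.exists_dist_lt x hε
  ⟨⟨a, ha⟩, hxa⟩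

section DenseExtension

variable {X : Type*} [MetricSpace X] {p : X → Prop}

def extendRel (r : {x // p x} → {x // p x} → Prop) (x y : X) : Prop :=
  ∃ a b : {x // p x}, dist x a.1 < dist x y ∧ dist y b.1 < dist x y ∧ r a b

variable {r : {x // p x} → {x // p x} → Prop}

lemma extendRel.dist_pos {x y : X} (h : extendRel r x y) : 0 < dist x y :=
  let ⟨_, _, hx, _⟩ := h
  dist_nonneg.trans_lt hx

variable [IsUltrametricDist X]

lemma extendRel_iff (hr : IsConvexSTO dist r) {x y : X} {a b : {x // p x}}
    (ha : dist x a.1 < dist x y) (hb : dist y b.1 < dist x y) : extendRel r x y ↔ r a b := by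
  refine ⟨fun ⟨a', b', ha', hb', hab'⟩ => ?_, fun h => ⟨a, b, ha, hb, h⟩⟩
  have hd : dist a'.1 b'.1 = dist x y := IsUltrametricDist.dist_eq_of_dist_lt ha' hb'
  refine (hr.rel_iff_of_dist_lt ?_ ?_).1 hab' <;> rw [Subtype.dist_eq, Subtype.dist_eq, hd]
  · exact (dist_triangle_max _ x _).trans_lt (max_lt (by rwa [dist_comm]) ha)
  · exact (dist_triangle_max _ y _).trans_lt (max_lt (by rwa [dist_comm]) hb)

lemma extendRel_restrict (hr : IsConvexSTO dist r) (a b : {x // p x}) :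
    extendRel r a.1 b.1 ↔ r a b := by
  by_cases hab : a = b
  · subst hab
    exact iff_of_false (fun h => (h.dist_pos).ne' (dist_self _)) (hr.1.1 a)
  · have hpos : 0 < dist a.1 b.1 := dist_pos.2 (Subtype.coe_injective.ne hab)
    exact extendRel_iff hr (by rwa [dist_self]) (by rwa [dist_self])

lemma extendRel_trans_and_dist_le (hD : Dense {x | p x}) (hr : IsConvexSTO dist r) {x y z : X}
    (hxy : extendRel r x y) (hyz : extendRel r y z) :
    extendRel r x z ∧ dist x y ≤ dist x z ∧ dist y z ≤ dist x z := by
  obtain ⟨ε, hε, hεxy, hεyz⟩ : ∃ ε > 0, ε ≤ dist x y ∧ ε ≤ dist y z :=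
    ⟨_, lt_min hxy.dist_pos hyz.dist_pos, min_le_left _ _, min_le_right _ _⟩
  obtain ⟨a, ha⟩ := hD.exists_subtype_dist_lt x hε
  obtain ⟨b, hb⟩ := hD.exists_subtype_dist_lt y hε
  obtain ⟨c, hc⟩ := hD.exists_subtype_dist_lt z hε
  have hab : r a b := (extendRel_iff hr (ha.trans_le hεxy) (hb.trans_le hεxy)).1 hxy
  have hbc : r b c := (extendRel_iff hr (hb.trans_le hεyz) (hc.trans_le hεyz)).1 hyz
  have hdab : dist a.1 b.1 = dist x y :=
    IsUltrametricDist.dist_eq_of_dist_lt (ha.trans_le hεxy) (hb.trans_le hεxy)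
  have hdbc : dist b.1 c.1 = dist y z :=
    IsUltrametricDist.dist_eq_of_dist_lt (hb.trans_le hεyz) (hc.trans_le hεyz)
  obtain ⟨hxy_ac, hyz_ac⟩ : dist x y ≤ dist a.1 c.1 ∧ dist y z ≤ dist a.1 c.1 := by
    rw [← hdab, ← hdbc]
    exact hr.2 a b c hab hbc
  have hxa : dist x a.1 < dist a.1 c.1 := (ha.trans_le hεxy).trans_le hxy_ac
  have hzc : dist z c.1 < dist a.1 c.1 := (hc.trans_le hεyz).trans_le hyz_ac
  have hxz : dist x z = dist a.1 c.1 :=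
    IsUltrametricDist.dist_eq_of_dist_lt (by rwa [dist_comm]) (by rwa [dist_comm])
  rw [hxz]
  exact ⟨⟨a, c, hxz ▸ hxa, hxz ▸ hzc, hr.1.2.1 a b c hab hbc⟩, hxy_ac, hyz_ac⟩

lemma IsConvexSTO.extendRel (hD : Dense {x | p x}) (hr : IsConvexSTO dist r) :
    IsConvexSTO dist (extendRel r) := by
  refine ⟨⟨fun x h => h.dist_pos.ne' (dist_self x),
    fun x y z hxy hyz => (extendRel_trans_and_dist_le hD hr hxy hyz).1, fun x y => ?_⟩,
    fun x y z hxy hyz => (extendRel_trans_and_dist_le hD hr hxy hyz).2⟩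
  rcases eq_or_ne x y with hxy | hxy
  · exact Or.inr (Or.inl hxy)
  obtain ⟨a, ha⟩ := hD.exists_subtype_dist_lt x (dist_pos.2 hxy)
  obtain ⟨b, hb⟩ := hD.exists_subtype_dist_lt y (dist_pos.2 hxy)
  rcases hr.1.2.2 a b with hab | rfl | hba
  · exact Or.inl ((extendRel_iff hr ha hb).2 hab)
  · have := IsUltrametricDist.dist_eq_of_dist_lt ha hb
    rw [dist_self] at this
    exact absurd this.symm (dist_pos.2 hxy).ne'
  · rw [dist_comm x y] at ha hb
    exact Or.inr (Or.inr ((extendRel_iff hr hb ha).2 hba))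

lemma IsConvexSTO.iff_of_dense (hD : Dense {x | p x}) {r₁ r₂ : X → X → Prop}
    (h₁ : IsConvexSTO dist r₁) (h₂ : IsConvexSTO dist r₂)
    (hres : ∀ a b : {x // p x}, r₁ a b ↔ r₂ a b) (x y : X) : r₁ x y ↔ r₂ x y := by
  rcases eq_or_ne x y with rfl | hxy
  · exact iff_of_false (h₁.1.1 x) (h₂.1.1 x)
  obtain ⟨a, ha⟩ := hD.exists_subtype_dist_lt x (dist_pos.2 hxy)
  obtain ⟨b, hb⟩ := hD.exists_subtype_dist_lt y (dist_pos.2 hxy)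
  rw [h₁.rel_iff_of_dist_lt ha hb, h₂.rel_iff_of_dist_lt ha hb]
  exact hres a b

end DenseExtension

lemma ψ_injective (S : Set ℝ) : Function.Injective (ψ S) := by
  intro r₁ r₂ h
  have hψ : ∀ a b : Qsub S, r₁.1 a.1 b.1 = r₂.1 a.1 b.1 :=
    congrFun₂ (congrArg Subtype.val h)
  have hres (a b : Qsub S) : r₁.1 a.1 b.1 = true ↔ r₂.1 a.1 b.1 = true := by rw [hψ]
  exact Subtype.ext <| funext₂ fun x y =>
    Bool.eq_iff_iff.2 (r₁.2.iff_of_dense US.dense_finite_support r₂.2 hres x y)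

lemma ψ_surjective (S : Set ℝ) : Function.Surjective (ψ S) := fun r =>
  ⟨⟨fun x y => decide (extendRel (fun a b => r.1 a b = true) x y), by
      simp only [decide_eq_true_eq]
      exact r.2.extendRel US.dense_finite_support⟩,
    Subtype.ext <| funext₂ fun a b =>
      Bool.eq_iff_iff.2 (decide_eq_true_iff.trans (extendRel_restrict r.2 a b))⟩

lemma isClosed_setOf_eval₃ {X : Type*} (q : Bool → Bool → Bool → Prop) (i j k : X × X) :
    IsClosed {r : X → X → Bool | q (r i.1 i.2) (r j.1 j.2) (r k.1 k.2)} :=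
  IsClosed.preimage (f := fun r : X → X → Bool => (r i.1 i.2, r j.1 j.2, r k.1 k.2))
    (by fun_prop) (isClosed_discrete {v : Bool × Bool × Bool | q v.1 v.2.1 v.2.2})

lemma isClosed_setOf_isConvexSTO {X : Type*} (d : X → X → ℝ) :
    IsClosed {r : X → X → Bool | IsConvexSTO d fun x y => r x y = true} := by
  simp only [IsConvexSTO, IsSTO, Set.ofPred_and, Set.ofPred_forall]
  refine ((isClosed_iInter fun x => ?_).inter ((isClosed_iInter fun x => isClosed_iInter
    fun y => isClosed_iInter fun z => ?_).inter (isClosed_iInter fun x => isClosed_iInter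
    fun y => ?_))).inter (isClosed_iInter fun x => isClosed_iInter fun y => isClosed_iInter
    fun z => ?_)
  · exact isClosed_setOf_eval₃ (fun a _ _ => ¬a = true) (x, x) (x, x) (x, x)
  · exact isClosed_setOf_eval₃ (fun a b c => a = true → b = true → c = true)
      (x, y) (y, z) (x, z)
  · exact isClosed_setOf_eval₃ (fun a _ c => a = true ∨ x = y ∨ c = true)
      (x, y) (x, y) (y, x)
  · exact isClosed_setOf_eval₃
      (fun a b _ => a = true → b = true → d x y ≤ d x z ∧ d y z ≤ d x z)
      (x, y) (y, z) (x, z)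

instance (S : Set ℝ) : CompactSpace (cLOU S) :=
  isCompact_iff_compactSpace.1 (isClosed_setOf_isConvexSTO (dU S)).isCompact

instance (S : Set ℝ) : T2Space (cLOQ S) :=
  inferInstanceAs (T2Space {r : Qsub S → Qsub S → Bool //
    IsConvexSTO (fun x y : Qsub S => dU S x.1 y.1) (fun x y => r x y = true)})

lemma continuous_ψ (S : Set ℝ) : Continuous (ψ S) :=
  Continuous.subtype_mk (continuous_pi fun a => continuous_pi fun b =>
    (continuous_apply b.1).comp ((continuous_apply a.1).comp continuous_subtype_val)) _

lemma Qsub.countable {S : Set ℝ} (hS : S.Countable) : Countable (Qsub S) :=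
  have := hS.to_subtype
  Function.Injective.countable (f := fun x : Qsub S => Finsupp.ofSupportFinite x.1.1 x.2)
    fun _ _ h => Subtype.ext (Subtype.ext (congrArg (⇑) h))

lemma cLOQ.metrizableSpace {S : Set ℝ} (hS : S.Countable) :
    TopologicalSpace.MetrizableSpace (cLOQ S) :=
  have := Qsub.countable hS
  TopologicalSpace.MetrizableSpace.subtype
    {r : Qsub S → Qsub S → Bool |
      IsConvexSTO (fun x y : Qsub S => dU S x.1 y.1) (fun x y => r x y = true)}

theorem psi_homeomorphism_general
    (S : Set ℝ) (hScount : S.Countable) :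
    (∃ h : cLOU S ≃ₜ cLOQ S, ⇑h = ψ S) ∧
    CompactSpace (cLOU S) ∧ TopologicalSpace.MetrizableSpace (cLOU S) := by
  let h : cLOU S ≃ₜ cLOQ S := (continuous_ψ S).homeoOfEquivCompactToT2
    (f := Equiv.ofBijective _ ⟨ψ_injective S, ψ_surjective S⟩)
  have := cLOQ.metrizableSpace hScount
  exact ⟨⟨h, rfl⟩, inferInstance, h.isEmbedding.metrizableSpace⟩

/-- The restriction map `ψ : cLO(U_S) → cLO(Q_S)` is a homeomorphism; in particular
`cLO(U_S)` is a compact metrizable space. -/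
theorem psi_homeomorphism
    (S : Set ℝ) (hScount : S.Countable) (hSpos : ∀ s ∈ S, 0 < s)
    (hacc : ∀ ε > 0, ∃ s ∈ S, s < ε) :
    (∃ h : cLOU S ≃ₜ cLOQ S, ⇑h = ψ S) ∧
    CompactSpace (cLOU S) ∧ TopologicalSpace.MetrizableSpace (cLOU S) :=
  psi_homeomorphism_general S hScount
end

section
/- Let S be a countable set of positive reals having 0 as an accumulation point. Every bijective order-preserving self-isometry of (Q_S, <_lex) extends uniquely to a bijective order-preserving self-isometry of (U_S, <_lex), and the extension map g ↦ ĝ is an injective continuous group homomorphism from Aut(Q_S, <_lex) to Aut(U_S, <_lex) with dense range, where Aut(Q_S, <_lex) carries the topology of pointwise convergence on the discrete space Q_S and Aut(U_S, <_lex) carries the topology of pointwise convergence on the metric space U_S. -/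
open Classical

/-- The lexicographical ordering on `U_S` : `x <lex y` iff `x s < y s` where `s` is
the largest element of `S` at which `x` and `y` differ (i.e. `s = d x y`). -/
def lexU (S : Set ℝ) (x y : US S) : Prop :=
  ∃ s : S, x.1 s < y.1 s ∧ ∀ t : S, (s : ℝ) < (t : ℝ) → x.1 t = y.1 t

/-- The distance of `Q_S` : `d x y = max {s ∈ S | x s ≠ y s}`. -/
noncomputable def dQs (S : Set ℝ) (x y : Qsub S) : ℝ :=
  sSup (Subtype.val '' {s : S | x.1.1 s ≠ y.1.1 s})

/-- The lexicographical ordering on `Q_S`. -/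
def lexQs (S : Set ℝ) (x y : Qsub S) : Prop := lexU S x.1 y.1

/-- The group `Aut(Q_S, <lex)` of bijective order-preserving self-isometries of
`(Q_S, <lex)`. -/
def AutQ (S : Set ℝ) :=
  {g : Qsub S ≃ Qsub S //
    (∀ x y, dQs S (g x) (g y) = dQs S x y) ∧ (∀ x y, lexQs S (g x) (g y) ↔ lexQs S x y)}

/-- The group `Aut(U_S, <lex)` of bijective order-preserving self-isometries of
`(U_S, <lex)`. -/
def AutU (S : Set ℝ) :=
  {g : US S ≃ US S //
    (∀ x y, dU S (g x) (g y) = dU S x y) ∧ (∀ x y, lexU S (g x) (g y) ↔ lexU S x y)}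

instance (S : Set ℝ) : Group (AutQ S) where
  mul g h := ⟨h.1.trans g.1,
    fun x y => by simp only [Equiv.trans_apply]; rw [g.2.1, h.2.1],
    fun x y => by simp only [Equiv.trans_apply]; exact (g.2.2 _ _).trans (h.2.2 _ _)⟩
  one := ⟨Equiv.refl _, fun x y => rfl, fun x y => Iff.rfl⟩
  inv g := ⟨g.1.symm,
    fun x y => by have := g.2.1 (g.1.symm x) (g.1.symm y); simpa using this.symm,
    fun x y => by have := g.2.2 (g.1.symm x) (g.1.symm y); simpa using this.symm⟩
  mul_assoc a b c := Subtype.ext (Equiv.ext fun x => rfl)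
  one_mul a := Subtype.ext (Equiv.ext fun x => rfl)
  mul_one a := Subtype.ext (Equiv.ext fun x => rfl)
  inv_mul_cancel g := Subtype.ext (Equiv.ext fun x => g.1.symm_apply_apply x)

instance (S : Set ℝ) : Group (AutU S) where
  mul g h := ⟨h.1.trans g.1,
    fun x y => by simp only [Equiv.trans_apply]; rw [g.2.1, h.2.1],
    fun x y => by simp only [Equiv.trans_apply]; exact (g.2.2 _ _).trans (h.2.2 _ _)⟩
  one := ⟨Equiv.refl _, fun x y => rfl, fun x y => Iff.rfl⟩
  inv g := ⟨g.1.symm,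
    fun x y => by have := g.2.1 (g.1.symm x) (g.1.symm y); simpa using this.symm,
    fun x y => by have := g.2.2 (g.1.symm x) (g.1.symm y); simpa using this.symm⟩
  mul_assoc a b c := Subtype.ext (Equiv.ext fun x => rfl)
  one_mul a := Subtype.ext (Equiv.ext fun x => rfl)
  mul_one a := Subtype.ext (Equiv.ext fun x => rfl)
  inv_mul_cancel g := Subtype.ext (Equiv.ext fun x => g.1.symm_apply_apply x)

/-- `Q_S` carries the discrete topology. -/
instance (S : Set ℝ) : TopologicalSpace (Qsub S) := ⊥

/-- `Aut(Q_S, <lex)` carries the topology of pointwise convergence on the discrete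
space `Q_S` (for the group and its inverses). -/
instance (S : Set ℝ) : TopologicalSpace (AutQ S) :=
  TopologicalSpace.induced
    (fun g : AutQ S => ((g.1 : Qsub S → Qsub S), (g.1.symm : Qsub S → Qsub S)))
    inferInstance

/-- `U_S` carries the metric topology of `dU`. -/
instance (S : Set ℝ) : TopologicalSpace (US S) :=
  TopologicalSpace.generateFrom
    {B : Set (US S) | ∃ x ε, 0 < ε ∧ B = {y | dU S x y < ε}}

/-- `Aut(U_S, <lex)` carries the topology of pointwise convergence on the metric
space `U_S` (for the group and its inverses). -/
instance (S : Set ℝ) : TopologicalSpace (AutU S) :=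
  TopologicalSpace.induced
    (fun g : AutU S => ((g.1 : US S → US S), (g.1.symm : US S → US S)))
    inferInstance

/-! Write `d(x, y)` for the distance on `U_S`. For `x ≠ y` it is the largest `s` with
`x s ≠ y s`, and `x <lex y` is decided by the coordinates at that `s`. So an order-preserving
isometry is a map that fixes the position of the leading difference of every pair and the order
of the two coordinates there.

An automorphism `g` of `Q_S` is an isometry, so the coordinates of `g x` above `r` depend only on
the coordinates of `x` above `r`. It therefore extends to `U_S`: the coordinate of `ĝ x` at `s` is
the coordinate at `s` of `g` applied to the truncation of `x` at any height `r < s` (truncations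
lie in `Q_S`). Isometries of `U_S` that agree on the finitely supported elements are equal,
since every `x` agrees with its truncations. This gives uniqueness, and the homomorphism
property follows. The coordinates of `ĝ x` above `r` depend only on the value of `g` at one point
of `Q_S`, so `g ↦ ĝ` is continuous. For density, let `h` be an automorphism of `U_S` and `r > 0`.
Take the coordinates of `h x` above `r` and those of `x` at heights `≤ r`. This gives an
automorphism of `U_S` that preserves finite support, so it is an extension. It converges to `h`
as `r → 0`.
-/

open Filter Topology Set

section

variable {S : Set ℝ}

def SparseSupport (x : S → ℚ) : Prop :=
  ∀ ε > 0, {s : S | x s ≠ 0 ∧ ε ≤ (s : ℝ)}.Finite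

theorem SparseSupport.of_ne_zero_or {x y z : S → ℚ} (hx : SparseSupport x)
    (hy : SparseSupport y) (hz : ∀ s, z s ≠ 0 → x s ≠ 0 ∨ y s ≠ 0) : SparseSupport z :=
  fun ε hε => ((hx ε hε).union (hy ε hε)).subset fun s ⟨hs, hεs⟩ =>
    (hz s hs).imp (fun h => ⟨h, hεs⟩) fun h => ⟨h, hεs⟩

theorem finite_setOf_le_of_tendsto_zero {f : ℕ → ℝ} (hf : Tendsto f atTop (𝓝 0)) {ε : ℝ}
    (hε : 0 < ε) : {i | ε ≤ f i}.Finite := by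
  simpa [← Nat.cofinite_eq_atTop] using hf.eventually (gt_mem_nhds hε)

theorem exists_strictAnti_range_eq_of_finite_inter_Ici {B : Set ℝ} (hpos : ∀ b ∈ B, 0 < b)
    (hfin : ∀ ε > 0, (B ∩ Ici ε).Finite) (hinf : B.Infinite) :
    ∃ f : ℕ → ℝ, StrictAnti f ∧ range f = B ∧ Tendsto f atTop (𝓝 0) := by
  have hfin' (b : B) : {a : B | b.1 ≤ a.1}.Finite :=
    ((hfin b.1 (hpos b.1 b.2)).preimage Subtype.val_injective.injOn).subset
      fun a ha => ⟨a.2, ha⟩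
  obtain ⟨b₀, hb₀⟩ := hinf.nonempty
  obtain ⟨m, ⟨hmB, hm₀⟩, hm⟩ :=
    exists_max_image _ id (hfin b₀ (hpos b₀ hb₀)) ⟨b₀, hb₀, self_mem_Ici⟩
  have hmax (b) (hb : b ∈ B) : b ≤ m :=
    (le_total b₀ b).elim (fun h => hm b ⟨hb, h⟩) fun h => h.trans hm₀
  -- ordered downwards, `B` is a locally finite order with a bottom and no top, hence `≃o ℕ`
  let T := (↥B)ᵒᵈ
  let _ : LocallyFiniteOrder T := LocallyFiniteOrder.ofFiniteIcc fun a b =>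
    (hfin' (OrderDual.ofDual b)).subset fun c hc => hc.2
  let _ := LinearLocallyFiniteOrder.succOrder T
  let _ := LinearLocallyFiniteOrder.predOrder T
  let _ : OrderBot T :=
    { bot := OrderDual.toDual ⟨m, hmB⟩, bot_le := fun a => hmax _ (OrderDual.ofDual a).2 }
  have : NoMaxOrder T := ⟨fun a => by
    obtain ⟨b, hb, hba⟩ :=
      (hinf.sdiff ((hfin' (OrderDual.ofDual a)).image Subtype.val)).nonempty
    refine ⟨OrderDual.toDual ⟨b, hb⟩, ?_⟩
    show b < (OrderDual.ofDual a).1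
    by_contra! h
    exact hba ⟨⟨b, hb⟩, h, rfl⟩⟩
  let e := orderIsoNatOfLinearSuccPredArch (ι := T)
  set f : ℕ → ℝ := fun n => (OrderDual.ofDual (e.symm n)).1
  have hf : StrictAnti f := fun n k h => e.symm.strictMono h
  have hfB (n) : f n ∈ B := (e.symm n).2
  refine ⟨f, hf, ?_, tendsto_order.2 ⟨fun a ha => .of_forall fun n => ha.trans (hpos _ (hfB n)),
    fun ε hε => ?_⟩⟩
  · refine (range_subset_iff.2 hfB).antisymm fun b hb => ⟨e (OrderDual.toDual ⟨b, hb⟩), ?_⟩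
    simp [f]
  · have : {n | ε ≤ f n}.Finite :=
      ((hfin ε hε).preimage hf.injective.injOn).subset fun n hn => ⟨hfB n, hn⟩
    simpa [← Nat.cofinite_eq_atTop] using this.eventually_cofinite_notMem

theorem USsupp.sparseSupport {x : S → ℚ} (hx : USsupp S x) : SparseSupport x := by
  obtain ⟨f, hf, -, hf0, hsupp⟩ := hx
  intro ε hε
  refine (((finite_setOf_le_of_tendsto_zero hf0 hε).image f).preimage
    Subtype.val_injective.injOn).subset fun s ⟨hs, hεs⟩ => ?_
  obtain ⟨i, hi⟩ := hsupp s hs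
  exact ⟨i, show ε ≤ f i from hi ▸ hεs, hi.symm⟩

theorem usSupp_of_sparseSupport (hpos : ∀ s ∈ S, 0 < s) (hacc : ∀ ε > 0, ∃ s ∈ S, s < ε)
    {x : S → ℚ} (hx : SparseSupport x) : USsupp S x := by
  have hglb : IsGLB S 0 := ⟨fun s hs => (hpos s hs).le, fun a ha => by
    by_contra! h0
    obtain ⟨s, hs, hsa⟩ := hacc a h0
    exact (ha hs).not_gt hsa⟩
  obtain ⟨s₀, hs₀, -⟩ := hacc 1 one_pos
  obtain ⟨c, hc, -, hc0, hcS⟩ :=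
    hglb.exists_seq_strictAnti_tendsto_of_notMem (fun h0 => (hpos 0 h0).false) ⟨s₀, hs₀⟩
  -- the sequence `c` keeps `B` infinite when the support of `x` is finite
  set B := Subtype.val '' {s : S | x s ≠ 0} ∪ range c
  have hBS : B ⊆ S := union_subset (image_subset_iff.2 fun s _ => s.2) (range_subset_iff.2 hcS)
  have hBfin : ∀ ε > 0, (B ∩ Ici ε).Finite := fun ε hε => by
    rw [union_inter_distrib_right]
    refine ((hx ε hε).image Subtype.val |>.subset ?_).union
      ((finite_setOf_le_of_tendsto_zero hc0 hε).image c |>.subset ?_)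
    · rintro _ ⟨⟨s, hs, rfl⟩, hεs⟩
      exact ⟨s, ⟨hs, hεs⟩, rfl⟩
    · rintro _ ⟨⟨i, rfl⟩, hεi⟩
      exact ⟨i, hεi, rfl⟩
  obtain ⟨f, hf, hfB, hf0⟩ := exists_strictAnti_range_eq_of_finite_inter_Ici
    (fun b hb => hpos b (hBS hb)) hBfin
    ((infinite_range_of_injective hc.injective).mono subset_union_right)
  refine ⟨f, hf, fun i => hBS (hfB ▸ mem_range_self i), hf0, fun s hs => ?_⟩
  have hsB : (s : ℝ) ∈ B := subset_union_left (mem_image_of_mem _ hs)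
  rw [← hfB] at hsB
  obtain ⟨i, hi⟩ := hsB
  exact ⟨i, hi.symm⟩

namespace US

theorem ext {x y : US S} (h : ∀ s, x.1 s = y.1 s) : x = y := Subtype.ext (funext h)

def AgreeAbove (r : ℝ) (x y : US S) : Prop := ∀ t : S, r < (t : ℝ) → x.1 t = y.1 t

theorem AgreeAbove.symm {r : ℝ} {x y : US S} (h : AgreeAbove r x y) : AgreeAbove r y x :=
  fun t ht => (h t ht).symm

theorem AgreeAbove.trans {r : ℝ} {x y z : US S} (h : AgreeAbove r x y)
    (h' : AgreeAbove r y z) : AgreeAbove r x z :=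
  fun t ht => (h t ht).trans (h' t ht)

theorem AgreeAbove.mono {r r' : ℝ} {x y : US S} (h : AgreeAbove r x y) (hr : r ≤ r') :
    AgreeAbove r' x y :=
  fun t ht => h t (hr.trans_lt ht)

def IsLeadingDiff (s : S) (x y : US S) : Prop := x.1 s ≠ y.1 s ∧ AgreeAbove s x y

theorem exists_isLeadingDiff (hpos : ∀ s ∈ S, 0 < s) {x y : US S} (h : x ≠ y) :
    ∃ s, IsLeadingDiff s x y := by
  obtain ⟨d, hd⟩ : ∃ d, x.1 d ≠ y.1 d := by
    by_contra! h'
    exact h (ext h')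
  have hfin : {s : S | (x.1 - y.1) s ≠ 0 ∧ (d : ℝ) ≤ s}.Finite :=
    SparseSupport.of_ne_zero_or x.2.sparseSupport y.2.sparseSupport
      (fun s hs => by by_contra! h0; simp [h0] at hs) d (hpos d d.2)
  obtain ⟨s, ⟨hs, hds⟩, hmax⟩ :=
    exists_max_image _ Subtype.val hfin ⟨d, sub_ne_zero.2 hd, le_rfl⟩
  refine ⟨s, sub_ne_zero.1 hs, fun t hst => ?_⟩
  by_contra ht
  exact (hmax t ⟨sub_ne_zero.2 ht, hds.trans hst.le⟩).not_gt hst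

theorem IsLeadingDiff.dU_eq {s : S} {x y : US S} (h : IsLeadingDiff s x y) :
    dU S x y = s := by
  have hlb : ∀ r ∈ {r : ℝ | r ∈ S ∧ AgreeAbove r x y}, (s : ℝ) ≤ r := fun r hr => by
    by_contra! hrs
    exact h.1 (hr.2 s hrs)
  rw [dU, if_neg fun hxy => h.1 (by rw [hxy])]
  exact le_antisymm (csInf_le ⟨s, hlb⟩ ⟨s.2, h.2⟩) (le_csInf ⟨s, s.2, h.2⟩ hlb)

theorem IsLeadingDiff.lexU_iff {s : S} {x y : US S} (h : IsLeadingDiff s x y) :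
    lexU S x y ↔ x.1 s < y.1 s := by
  refine ⟨fun ⟨t, hlt, hagree⟩ => ?_, fun hlt => ⟨s, hlt, h.2⟩⟩
  rcases lt_trichotomy (t : ℝ) s with hts | hts | hts
  · exact absurd (hagree s hts) h.1
  · rwa [← Subtype.ext hts]
  · exact absurd (h.2 t hts) hlt.ne

theorem IsLeadingDiff.congr {r : ℝ} {s : S} {x y x' y' : US S} (h : IsLeadingDiff s x y)
    (hrs : r < s) (hx : AgreeAbove r x' x) (hy : AgreeAbove r y' y) :
    IsLeadingDiff s x' y' :=
  ⟨by rw [hx s hrs, hy s hrs]; exact h.1,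
    fun t ht => by rw [hx t (hrs.trans ht), hy t (hrs.trans ht)]; exact h.2 t ht⟩

theorem dU_self (x : US S) : dU S x x = 0 := if_pos rfl

theorem lexU_irrefl (x : US S) : ¬ lexU S x x := fun ⟨_, hlt, _⟩ => hlt.false

theorem dU_le_iff (hpos : ∀ s ∈ S, 0 < s) {x y : US S} {r : ℝ} (hr : 0 < r) :
    dU S x y ≤ r ↔ AgreeAbove r x y := by
  by_cases hxy : x = y
  · subst hxy
    exact iff_of_true (by rw [dU_self]; exact hr.le) fun t _ => rfl
  obtain ⟨s, hs⟩ := exists_isLeadingDiff hpos hxy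
  rw [hs.dU_eq]
  refine ⟨hs.2.mono, fun h => ?_⟩
  by_contra! hrs
  exact hs.1 (h s hrs)

theorem dU_nonneg (hpos : ∀ s ∈ S, 0 < s) (x y : US S) : 0 ≤ dU S x y := by
  by_cases hxy : x = y
  · rw [hxy, dU_self]
  · obtain ⟨s, hs⟩ := exists_isLeadingDiff hpos hxy
    exact hs.dU_eq ▸ (hpos s s.2).le

theorem dU_le_max (hpos : ∀ s ∈ S, 0 < s) (x y z : US S) :
    dU S x z ≤ max (dU S x y) (dU S y z) := by
  refine le_of_forall_gt_imp_ge_of_dense fun r hr => ?_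
  have hr0 : 0 < r := (le_max_of_le_left (dU_nonneg hpos x y)).trans_lt hr
  rw [dU_le_iff hpos hr0]
  exact ((dU_le_iff hpos hr0).1 (le_of_max_le_left hr.le)).trans
    ((dU_le_iff hpos hr0).1 (le_of_max_le_right hr.le))

theorem AgreeAbove.of_dU_eq (hpos : ∀ s ∈ S, 0 < s) {r : ℝ} (hr : 0 < r) {x y x' y' : US S}
    (h : AgreeAbove r x y) (hd : dU S x' y' = dU S x y) : AgreeAbove r x' y' := by
  rw [← dU_le_iff hpos hr, hd, dU_le_iff hpos hr]
  exact h

theorem IsLeadingDiff.of_dU_eq (hpos : ∀ s ∈ S, 0 < s) {s : S} {x y x' y' : US S}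
    (h : IsLeadingDiff s x y) (hd : dU S x' y' = dU S x y) : IsLeadingDiff s x' y' := by
  have hne : x' ≠ y' := fun h' => by
    rw [h', dU_self, h.dU_eq] at hd
    exact (hpos s s.2).ne hd
  obtain ⟨t, ht⟩ := exists_isLeadingDiff hpos hne
  rwa [show s = t from Subtype.ext (by rw [← h.dU_eq, ← hd, ht.dU_eq])]

theorem IsLeadingDiff.of_dU_eq_of_lexU_iff (hpos : ∀ s ∈ S, 0 < s) {s : S} {x y x' y' : US S}
    (h : IsLeadingDiff s x y) (hd : dU S x' y' = dU S x y) (hl : lexU S x' y' ↔ lexU S x y) :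
    IsLeadingDiff s x' y' ∧ (x'.1 s < y'.1 s ↔ x.1 s < y.1 s) := by
  have h' := h.of_dU_eq hpos hd
  exact ⟨h', by rw [← h'.lexU_iff, ← h.lexU_iff, hl]⟩

def PreservesLeadingDiff (F : US S → US S) : Prop :=
  ∀ x y s, IsLeadingDiff s x y →
    IsLeadingDiff s (F x) (F y) ∧ ((F x).1 s < (F y).1 s ↔ x.1 s < y.1 s)

theorem PreservesLeadingDiff.dU_eq (hpos : ∀ s ∈ S, 0 < s) {F : US S → US S}
    (hF : PreservesLeadingDiff F) (x y : US S) : dU S (F x) (F y) = dU S x y := by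
  by_cases hxy : x = y
  · rw [hxy, dU_self, dU_self]
  obtain ⟨s, hs⟩ := exists_isLeadingDiff hpos hxy
  rw [hs.dU_eq, (hF x y s hs).1.dU_eq]

theorem PreservesLeadingDiff.lexU_iff (hpos : ∀ s ∈ S, 0 < s) {F : US S → US S}
    (hF : PreservesLeadingDiff F) (x y : US S) : lexU S (F x) (F y) ↔ lexU S x y := by
  by_cases hxy : x = y
  · rw [hxy]
    exact iff_of_false (lexU_irrefl _) (lexU_irrefl _)
  obtain ⟨s, hs⟩ := exists_isLeadingDiff hpos hxy
  rw [hs.lexU_iff, (hF x y s hs).1.lexU_iff, (hF x y s hs).2]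

theorem ball_subset_ball (hpos : ∀ s ∈ S, 0 < s) {z w : US S} {ε : ℝ} (hz : dU S z w < ε) :
    {v | dU S w v < ε} ⊆ {v | dU S z v < ε} :=
  fun v hv => (dU_le_max hpos z w v).trans_lt (max_lt hz hv)

theorem mem_ball_self (w : US S) {ε : ℝ} (hε : 0 < ε) : w ∈ {v | dU S w v < ε} := by
  simpa [dU_self] using hε

theorem isTopologicalBasis_balls (hpos : ∀ s ∈ S, 0 < s) :
    TopologicalSpace.IsTopologicalBasis
      {B : Set (US S) | ∃ x ε, 0 < ε ∧ B = {y | dU S x y < ε}} := by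
  refine ⟨?_, sUnion_eq_univ_iff.2 fun w =>
    ⟨_, ⟨w, 1, one_pos, rfl⟩, mem_ball_self w one_pos⟩, rfl⟩
  rintro _ ⟨z₁, ε₁, hε₁, rfl⟩ _ ⟨z₂, ε₂, hε₂, rfl⟩ w ⟨hw₁, hw₂⟩
  have hε := lt_min hε₁ hε₂
  refine ⟨_, ⟨w, _, hε, rfl⟩, mem_ball_self w hε, fun v hv => ?_⟩
  obtain ⟨hv₁, hv₂⟩ := lt_min_iff.1 (show dU S w v < min ε₁ ε₂ from hv)
  exact ⟨ball_subset_ball hpos hw₁ hv₁, ball_subset_ball hpos hw₂ hv₂⟩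

theorem nhds_hasBasis (hpos : ∀ s ∈ S, 0 < s) (u : US S) :
    (𝓝 u).HasBasis (fun r : ℝ => 0 < r) fun r => {v | AgreeAbove r v u} := by
  refine ⟨fun t => ⟨fun ht => ?_, fun ⟨r, hr, hrt⟩ => ?_⟩⟩
  · obtain ⟨_, ⟨z, ε, hε, rfl⟩, hzu, hεt⟩ :=
      (isTopologicalBasis_balls hpos).mem_nhds_iff.1 ht
    refine ⟨ε / 2, half_pos hε, fun v hv => hεt (ball_subset_ball hpos hzu ?_)⟩
    exact ((dU_le_iff hpos (half_pos hε)).2 hv.symm).trans_lt (half_lt_self hε)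
  · have hopen : IsOpen {v | dU S u v < r} :=
      TopologicalSpace.isOpen_generateFrom_of_mem ⟨u, r, hr, rfl⟩
    exact mem_of_superset (hopen.mem_nhds (mem_ball_self u hr))
      fun v hv => hrt ((dU_le_iff hpos hr).1 hv.le).symm

noncomputable def truncQ (x : US S) {r : ℝ} (hr : 0 < r) : Qsub S :=
  ⟨⟨fun s => if r < (s : ℝ) then x.1 s else 0, by
      obtain ⟨f, hf, hfS, hf0, hsupp⟩ := x.2
      exact ⟨f, hf, hfS, hf0, fun s hs => hsupp s fun h0 => hs (by simp [h0])⟩⟩,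
    (x.2.sparseSupport r hr).subset fun s hs => by
      by_cases hrs : r < (s : ℝ)
      · exact ⟨by simpa [hrs] using hs, hrs.le⟩
      · simp [hrs] at hs⟩

theorem agreeAbove_truncQ (x : US S) {r : ℝ} (hr : 0 < r) : AgreeAbove r (x.truncQ hr).1 x :=
  fun _ ht => if_pos ht

theorem eq_of_forall_Qsub (hpos : ∀ s ∈ S, 0 < s) {F G : US S → US S}
    (hF : ∀ x y, dU S (F x) (F y) = dU S x y) (hG : ∀ x y, dU S (G x) (G y) = dU S x y)
    (h : ∀ q : Qsub S, F q.1 = G q.1) : F = G := by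
  funext x
  refine ext fun s => ?_
  have hr := half_pos (hpos s s.2)
  have hrs := half_lt_self (hpos s s.2)
  have hFx := (x.agreeAbove_truncQ hr).of_dU_eq hpos hr (hF _ x)
  have hGx := (x.agreeAbove_truncQ hr).of_dU_eq hpos hr (hG _ x)
  rw [← hFx s hrs, ← hGx s hrs, h]

end US

theorem Qsub.dQs_eq_dU (hpos : ∀ s ∈ S, 0 < s) (x y : Qsub S) :
    dQs S x y = dU S x.1 y.1 := by
  by_cases hxy : x.1 = y.1
  · simp [dQs, hxy, US.dU_self]
  obtain ⟨s, hs⟩ := US.exists_isLeadingDiff hpos hxy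
  rw [hs.dU_eq, dQs]
  refine IsGreatest.csSup_eq ⟨⟨s, hs.1, rfl⟩, ?_⟩
  rintro _ ⟨t, ht, rfl⟩
  by_contra! hst
  exact ht (hs.2 t hst)

instance : DiscreteTopology (Qsub S) := ⟨rfl⟩

namespace AutU

theorem ext {g h : AutU S} (H : ∀ x, g.1 x = h.1 x) : g = h := Subtype.ext (Equiv.ext H)

theorem preservesLeadingDiff (hpos : ∀ s ∈ S, 0 < s) (h : AutU S) :
    US.PreservesLeadingDiff h.1 :=
  fun x y _ hs => hs.of_dU_eq_of_lexU_iff hpos (h.2.1 x y) (h.2.2 x y)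

theorem agreeAbove_apply (hpos : ∀ s ∈ S, 0 < s) (h : AutU S) {r : ℝ} (hr : 0 < r)
    {x y : US S} (hxy : US.AgreeAbove r x y) : US.AgreeAbove r (h.1 x) (h.1 y) :=
  hxy.of_dU_eq hpos hr (h.2.1 x y)

theorem tendsto_nhds_iff {α : Type*} {l : Filter α} {φ : α → AutU S} {h : AutU S} :
    Tendsto φ l (𝓝 h) ↔ (∀ x, Tendsto (fun a => (φ a).1 x) l (𝓝 (h.1 x))) ∧
      ∀ x, Tendsto (fun a => (φ a).1.symm x) l (𝓝 (h.1.symm x)) := by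
  rw [nhds_induced, tendsto_comap_iff, nhds_prod_eq, tendsto_prod_iff', tendsto_pi_nhds,
    tendsto_pi_nhds]
  rfl

def restrictQ (hpos : ∀ s ∈ S, 0 < s) (h : AutU S)
    (hQ : ∀ x : US S, {s | x.1 s ≠ 0}.Finite → {s | (h.1 x).1 s ≠ 0}.Finite)
    (hQ' : ∀ x : US S, {s | x.1 s ≠ 0}.Finite → {s | (h.1.symm x).1 s ≠ 0}.Finite) :
    AutQ S :=
  ⟨h.1.subtypeEquiv fun x => ⟨hQ x, fun hx => by simpa using hQ' _ hx⟩,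
    fun x y => by rw [Qsub.dQs_eq_dU hpos, Qsub.dQs_eq_dU hpos]; exact h.2.1 x.1 y.1,
    fun x y => h.2.2 x.1 y.1⟩

end AutU

namespace AutQ

theorem dU_apply (hpos : ∀ s ∈ S, 0 < s) (g : AutQ S) (x y : Qsub S) :
    dU S (g.1 x).1 (g.1 y).1 = dU S x.1 y.1 := by
  rw [← Qsub.dQs_eq_dU hpos, ← Qsub.dQs_eq_dU hpos, g.2.1]

theorem agreeAbove_apply (hpos : ∀ s ∈ S, 0 < s) (g : AutQ S) {r : ℝ} (hr : 0 < r)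
    {x y : Qsub S} (h : US.AgreeAbove r x.1 y.1) : US.AgreeAbove r (g.1 x).1 (g.1 y).1 :=
  h.of_dU_eq hpos hr (g.dU_apply hpos x y)

theorem continuous_coe_prod_symm :
    Continuous fun g : AutQ S => ((g.1 : Qsub S → Qsub S), (g.1.symm : Qsub S → Qsub S)) :=
  continuous_induced_dom

theorem eventually_apply_eq (g₀ : AutQ S) (q : Qsub S) :
    ∀ᶠ g in 𝓝 g₀, g.1 q = g₀.1 q := by
  have hc : Continuous fun g : AutQ S => g.1 q :=
    (continuous_apply q).comp continuous_coe_prod_symm.fst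
  exact tendsto_pure.1 (nhds_discrete (Qsub S) ▸ hc.continuousAt (x := g₀))

theorem eventually_symm_apply_eq (g₀ : AutQ S) (q : Qsub S) :
    ∀ᶠ g in 𝓝 g₀, g.1.symm q = g₀.1.symm q := by
  have hc : Continuous fun g : AutQ S => g.1.symm q :=
    (continuous_apply q).comp continuous_coe_prod_symm.snd
  exact tendsto_pure.1 (nhds_discrete (Qsub S) ▸ hc.continuousAt (x := g₀))

noncomputable def extendCoord (hpos : ∀ s ∈ S, 0 < s) (g : AutQ S) (x : US S) (s : S) : ℚ :=
  (g.1 (x.truncQ (half_pos (hpos s s.2)))).1.1 s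

theorem extendCoord_eq (hpos : ∀ s ∈ S, 0 < s) (g : AutQ S) (x : US S) {r : ℝ} (hr : 0 < r)
    {s : S} (hrs : r < s) : g.extendCoord hpos x s = (g.1 (x.truncQ hr)).1.1 s := by
  have hs := hpos s s.2
  have htrunc : US.AgreeAbove (max (s / 2) r) (x.truncQ (half_pos hs)).1 (x.truncQ hr).1 :=
    ((x.agreeAbove_truncQ _).mono (le_max_left _ _)).trans
      ((x.agreeAbove_truncQ hr).mono (le_max_right _ _)).symm
  exact g.agreeAbove_apply hpos (lt_max_of_lt_right hr) htrunc s
    (max_lt (half_lt_self hs) hrs)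

noncomputable def extendFun (hpos : ∀ s ∈ S, 0 < s) (hacc : ∀ ε > 0, ∃ s ∈ S, s < ε)
    (g : AutQ S) (x : US S) : US S :=
  ⟨g.extendCoord hpos x, usSupp_of_sparseSupport hpos hacc fun ε hε =>
    ((g.1 (x.truncQ (half_pos hε))).1.2.sparseSupport ε hε).subset fun s ⟨hs, hεs⟩ =>
      ⟨by rwa [← g.extendCoord_eq hpos x _ ((half_lt_self hε).trans_le hεs)], hεs⟩⟩

variable (hpos : ∀ s ∈ S, 0 < s) (hacc : ∀ ε > 0, ∃ s ∈ S, s < ε)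

theorem agreeAbove_extendFun (g : AutQ S) (x : US S) {r : ℝ} (hr : 0 < r) :
    US.AgreeAbove r (g.extendFun hpos hacc x) (g.1 (x.truncQ hr)).1 :=
  fun _ hrs => g.extendCoord_eq hpos x hr hrs

theorem extendFun_coe (g : AutQ S) (q : Qsub S) : g.extendFun hpos hacc q.1 = (g.1 q).1 := by
  refine US.ext fun s => ?_
  have hr := half_pos (hpos s s.2)
  have hrs := half_lt_self (hpos s s.2)
  rw [g.agreeAbove_extendFun hpos hacc q.1 hr s hrs]
  exact g.agreeAbove_apply hpos hr (y := q) (q.1.agreeAbove_truncQ hr) s hrs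

theorem preservesLeadingDiff_extendFun (g : AutQ S) :
    US.PreservesLeadingDiff (g.extendFun hpos hacc) := by
  intro x y s hs
  have hr := half_pos (hpos s s.2)
  have hrs := half_lt_self (hpos s s.2)
  obtain ⟨hlead, hlt⟩ := (hs.congr hrs (x.agreeAbove_truncQ hr) (y.agreeAbove_truncQ hr)
    ).of_dU_eq_of_lexU_iff hpos (g.dU_apply hpos _ _) (g.2.2 _ _)
  have hx := g.agreeAbove_extendFun hpos hacc x hr
  have hy := g.agreeAbove_extendFun hpos hacc y hr
  refine ⟨hlead.congr hrs hx hy, ?_⟩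
  rw [hx s hrs, hy s hrs, hlt, x.agreeAbove_truncQ hr s hrs, y.agreeAbove_truncQ hr s hrs]

theorem dU_extendFun (g : AutQ S) (x y : US S) :
    dU S (g.extendFun hpos hacc x) (g.extendFun hpos hacc y) = dU S x y :=
  (g.preservesLeadingDiff_extendFun hpos hacc).dU_eq hpos x y

theorem extendFun_one : (1 : AutQ S).extendFun hpos hacc = id :=
  US.eq_of_forall_Qsub hpos (dU_extendFun hpos hacc 1) (fun _ _ => rfl)
    fun q => extendFun_coe hpos hacc 1 q

theorem extendFun_mul (g h : AutQ S) :
    (g * h).extendFun hpos hacc = g.extendFun hpos hacc ∘ h.extendFun hpos hacc :=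
  US.eq_of_forall_Qsub hpos (dU_extendFun hpos hacc _)
    (fun x y => by simp only [Function.comp_apply, dU_extendFun])
    fun q => by simp only [Function.comp_apply, extendFun_coe]; rfl

noncomputable def extend (g : AutQ S) : AutU S :=
  ⟨{ toFun := g.extendFun hpos hacc
     invFun := g⁻¹.extendFun hpos hacc
     left_inv x := by
       simpa [extendFun_one] using (congrFun (extendFun_mul hpos hacc g⁻¹ g) x).symm
     right_inv x := by
       simpa [extendFun_one] using (congrFun (extendFun_mul hpos hacc g g⁻¹) x).symm },
    dU_extendFun hpos hacc g, (g.preservesLeadingDiff_extendFun hpos hacc).lexU_iff hpos⟩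

noncomputable def extendHom : AutQ S →* AutU S where
  toFun := extend hpos hacc
  map_one' := AutU.ext fun x => congrFun (extendFun_one hpos hacc) x
  map_mul' g h := AutU.ext fun x => congrFun (extendFun_mul hpos hacc g h) x

theorem extendHom_apply_coe (g : AutQ S) (q : Qsub S) :
    (extendHom hpos hacc g).1 q.1 = (g.1 q).1 :=
  g.extendFun_coe hpos hacc q

theorem eq_extendHom (g : AutQ S) (h : AutU S) (hh : ∀ q : Qsub S, h.1 q.1 = (g.1 q).1) :
    h = extendHom hpos hacc g :=
  AutU.ext <| congrFun <| US.eq_of_forall_Qsub hpos h.2.1 (dU_extendFun hpos hacc g)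
    fun q => by rw [hh, extendHom_apply_coe]

theorem extendHom_injective : Function.Injective (extendHom hpos hacc (S := S)) := by
  intro g g' h
  refine Subtype.ext (Equiv.ext fun q => Subtype.ext ?_)
  rw [← extendHom_apply_coe hpos hacc, h, extendHom_apply_coe]

theorem tendsto_extendFun {α : Type*} {l : Filter α} {φ : α → AutQ S} {g : AutQ S}
    (hφ : ∀ q, ∀ᶠ a in l, (φ a).1 q = g.1 q) (x : US S) :
    Tendsto (fun a => (φ a).extendFun hpos hacc x) l (𝓝 (g.extendFun hpos hacc x)) :=
  (US.nhds_hasBasis hpos _).tendsto_right_iff.2 fun r hr =>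
    (hφ (x.truncQ hr)).mono fun a ha => by
      refine ((φ a).agreeAbove_extendFun hpos hacc x hr).trans ?_
      rw [ha]
      exact (g.agreeAbove_extendFun hpos hacc x hr).symm

theorem continuous_extendHom : Continuous (extendHom hpos hacc (S := S)) :=
  continuous_iff_continuousAt.2 fun g₀ => AutU.tendsto_nhds_iff.2
    ⟨tendsto_extendFun hpos hacc g₀.eventually_apply_eq,
      tendsto_extendFun hpos hacc (φ := fun g => g⁻¹) g₀.eventually_symm_apply_eq⟩

end AutQ

namespace AutU

variable (hpos : ∀ s ∈ S, 0 < s) (hacc : ∀ ε > 0, ∃ s ∈ S, s < ε)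

noncomputable def patchFun (h : AutU S) (r : ℝ) (x : US S) : US S :=
  ⟨fun s => if r < (s : ℝ) then (h.1 x).1 s else x.1 s,
    usSupp_of_sparseSupport hpos hacc <|
      (h.1 x).2.sparseSupport.of_ne_zero_or x.2.sparseSupport fun s hs => by
        split_ifs at hs
        exacts [Or.inl hs, Or.inr hs]⟩

theorem agreeAbove_patchFun (h : AutU S) (r : ℝ) (x : US S) :
    US.AgreeAbove r (h.patchFun hpos hacc r x) (h.1 x) :=
  fun _ hrs => if_pos hrs

theorem patchFun_apply_of_le (h : AutU S) {r : ℝ} (x : US S) {s : S} (hsr : (s : ℝ) ≤ r) :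
    (h.patchFun hpos hacc r x).1 s = x.1 s :=
  if_neg hsr.not_gt

theorem preservesLeadingDiff_patchFun (h : AutU S) (r : ℝ) :
    US.PreservesLeadingDiff (h.patchFun hpos hacc r) := by
  intro x y s hs
  rcases lt_or_ge r s with hrs | hsr
  · obtain ⟨hlead, hlt⟩ := h.preservesLeadingDiff hpos x y s hs
    have hx := h.agreeAbove_patchFun hpos hacc r x
    have hy := h.agreeAbove_patchFun hpos hacc r y
    exact ⟨hlead.congr hrs hx hy, by rw [hx s hrs, hy s hrs, hlt]⟩
  · have hh := h.agreeAbove_apply hpos (hpos s s.2) hs.2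
    have hagree : US.AgreeAbove s (h.patchFun hpos hacc r x) (h.patchFun hpos hacc r y) :=
      fun t ht => by
        simp only [patchFun]
        split_ifs
        exacts [hh t ht, hs.2 t ht]
    have hx := h.patchFun_apply_of_le hpos hacc x hsr
    have hy := h.patchFun_apply_of_le hpos hacc y hsr
    exact ⟨⟨by rw [hx, hy]; exact hs.1, hagree⟩, by rw [hx, hy]⟩

theorem patchFun_inv_patchFun (h : AutU S) {r : ℝ} (hr : 0 < r) (x : US S) :
    h⁻¹.patchFun hpos hacc r (h.patchFun hpos hacc r x) = x := by
  refine US.ext fun s => ?_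
  rcases lt_or_ge r s with hrs | hsr
  · rw [h⁻¹.agreeAbove_patchFun hpos hacc r _ s hrs,
      h⁻¹.agreeAbove_apply hpos hr (h.agreeAbove_patchFun hpos hacc r x) s hrs]
    exact congrArg (fun y : US S => y.1 s) (h.1.symm_apply_apply x)
  · rw [patchFun_apply_of_le hpos hacc _ _ hsr, patchFun_apply_of_le hpos hacc _ _ hsr]

noncomputable def patch (h : AutU S) {r : ℝ} (hr : 0 < r) : AutU S :=
  ⟨⟨h.patchFun hpos hacc r, h⁻¹.patchFun hpos hacc r, h.patchFun_inv_patchFun hpos hacc hr,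
      fun x => by simpa using h⁻¹.patchFun_inv_patchFun hpos hacc hr x⟩,
    (h.preservesLeadingDiff_patchFun hpos hacc r).dU_eq hpos,
    (h.preservesLeadingDiff_patchFun hpos hacc r).lexU_iff hpos⟩

theorem finite_support_patchFun (h : AutU S) {r : ℝ} (hr : 0 < r) {x : US S}
    (hx : {s | x.1 s ≠ 0}.Finite) : {s | (h.patchFun hpos hacc r x).1 s ≠ 0}.Finite := by
  refine (((h.1 x).2.sparseSupport r hr).union hx).subset fun s hs => ?_
  by_cases hrs : r < (s : ℝ)
  · exact Or.inl ⟨by rwa [← h.agreeAbove_patchFun hpos hacc r x s hrs], hrs.le⟩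
  · exact Or.inr fun h0 => hs ((h.patchFun_apply_of_le hpos hacc x (not_lt.1 hrs)).trans h0)

theorem patch_mem_range (h : AutU S) {r : ℝ} (hr : 0 < r) :
    h.patch hpos hacc hr ∈ range (AutQ.extendHom hpos hacc) :=
  ⟨restrictQ hpos (h.patch hpos hacc hr) (fun _ => h.finite_support_patchFun hpos hacc hr)
      (fun _ => h⁻¹.finite_support_patchFun hpos hacc hr),
    (AutQ.eq_extendHom hpos hacc _ _ fun _ => rfl).symm⟩

theorem tendsto_patchFun (h : AutU S) (x : US S) :
    Tendsto (fun n : ℕ => h.patchFun hpos hacc (1 / (n + 1)) x) atTop (𝓝 (h.1 x)) :=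
  (US.nhds_hasBasis hpos _).tendsto_right_iff.2 fun _ hr =>
    (tendsto_one_div_add_atTop_nhds_zero_nat.eventually_lt_const hr).mono fun _ hn =>
      (h.agreeAbove_patchFun hpos hacc _ x).mono hn.le

theorem tendsto_patch (h : AutU S) :
    Tendsto (fun n : ℕ => h.patch hpos hacc (Nat.one_div_pos_of_nat (n := n))) atTop (𝓝 h) :=
  tendsto_nhds_iff.2 ⟨h.tendsto_patchFun hpos hacc, h⁻¹.tendsto_patchFun hpos hacc⟩

theorem denseRange_extendHom : DenseRange (AutQ.extendHom hpos hacc (S := S)) := fun h =>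
  mem_closure_of_tendsto (h.tendsto_patch hpos hacc)
    (.of_forall fun _ => h.patch_mem_range hpos hacc _)

end AutU

end

theorem extension_embedding_dense_general
    (S : Set ℝ) (hSpos : ∀ s ∈ S, 0 < s)
    (hacc : ∀ ε > 0, ∃ s ∈ S, s < ε) :
    ∃ E : AutQ S → AutU S,
      (∀ g : AutQ S, ∀ x : Qsub S, (E g).1 x.1 = (g.1 x).1) ∧
      (∀ (g : AutQ S) (h : AutU S), (∀ x : Qsub S, h.1 x.1 = (g.1 x).1) → h = E g) ∧
      Function.Injective E ∧
      Continuous E ∧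
      (∀ g h : AutQ S, E (g * h) = E g * E h) ∧
      DenseRange E :=
  ⟨AutQ.extendHom hSpos hacc, AutQ.extendHom_apply_coe hSpos hacc,
    AutQ.eq_extendHom hSpos hacc, AutQ.extendHom_injective hSpos hacc,
    AutQ.continuous_extendHom hSpos hacc, map_mul _, AutU.denseRange_extendHom hSpos hacc⟩

/-- Every element of `Aut(Q_S, <lex)` extends uniquely to an element of
`Aut(U_S, <lex)`, and the extension map is an injective continuous group homomorphism
with dense range. -/
theorem extension_embedding_dense
    (S : Set ℝ) (hScount : S.Countable) (hSpos : ∀ s ∈ S, 0 < s)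
    (hacc : ∀ ε > 0, ∃ s ∈ S, s < ε) :
    ∃ E : AutQ S → AutU S,
      (∀ g : AutQ S, ∀ x : Qsub S, (E g).1 x.1 = (g.1 x).1) ∧
      (∀ (g : AutQ S) (h : AutU S), (∀ x : Qsub S, h.1 x.1 = (g.1 x).1) → h = E g) ∧
      Function.Injective E ∧
      Continuous E ∧
      (∀ g h : AutQ S, E (g * h) = E g * E h) ∧
      DenseRange E :=
  extension_embedding_dense_general S hSpos hacc
end
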